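/- Let ℓ ∈ ℂ and set ℓ* := −conj(ℓ) − 1. Let g ∈ SL(2,ℝ), let φ be a branch of the circle action of g and ψ a branch of the circle action of g⁻¹. Then for all continuous 2π-periodic f, v : ℝ → ℂ: (1/2π)·∫₀^{2π} conj(f(θ))·σ_K(θ,g)^{−ℓ}·v(φ(θ)) dθ = (1/2π)·∫₀^{2π} conj(σ_K(θ,g⁻¹)^{−ℓ*}·f(ψ(θ)))·v(θ) dθ. That is, with respect to the inner product ⟨f|v⟩ = (1/2π)∫₀^{2π} conj(f)·v dθ, the adjoint of T_ℓ(g) is T_{ℓ*}(g⁻¹). -/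

import Mathlib

open Real

noncomputable section

abbrev SL2R := Matrix.SpecialLinearGroup (Fin 2) ℝ

/-- `u(θ,g) = a·cos(θ/2) + c·sin(θ/2)` for `g = [[a,b],[c,d]]`. -/
def uFun (g : SL2R) (θ : ℝ) : ℝ :=
  (g : Matrix (Fin 2) (Fin 2) ℝ) 0 0 * Real.cos (θ / 2) +
    (g : Matrix (Fin 2) (Fin 2) ℝ) 1 0 * Real.sin (θ / 2)

/-- `w(θ,g) = b·cos(θ/2) + d·sin(θ/2)` for `g = [[a,b],[c,d]]`. -/
def wFun (g : SL2R) (θ : ℝ) : ℝ :=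
  (g : Matrix (Fin 2) (Fin 2) ℝ) 0 1 * Real.cos (θ / 2) +
    (g : Matrix (Fin 2) (Fin 2) ℝ) 1 1 * Real.sin (θ / 2)

/-- The multiplier `σ_K(θ,g) = 1/(u² + w²)`. -/
def sigmaK (g : SL2R) (θ : ℝ) : ℝ := 1 / (uFun g θ ^ 2 + wFun g θ ^ 2)

/-- `φ : ℝ → ℝ` is a branch of the circle action of `g`. -/
def IsBranch (g : SL2R) (φ : ℝ → ℝ) : Prop :=
  ∀ θ : ℝ,
    Real.cos (φ θ / 2) = uFun g θ * Real.sqrt (sigmaK g θ) ∧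
    Real.sin (φ θ / 2) = wFun g θ * Real.sqrt (sigmaK g θ)

/-- `σ_K(θ,g)^{-ℓ} := exp(-ℓ·log σ_K(θ,g))`, as a complex number. -/
def sigmaKpow (g : SL2R) (θ : ℝ) (ℓ : ℂ) : ℂ :=
  Complex.exp (-ℓ * Real.log (sigmaK g θ))

lemma det_id (g : SL2R) : (g : Matrix (Fin 2) (Fin 2) ℝ) 0 0 * (g : Matrix (Fin 2) (Fin 2) ℝ) 1 1
    - (g : Matrix (Fin 2) (Fin 2) ℝ) 0 1 * (g : Matrix (Fin 2) (Fin 2) ℝ) 1 0 = 1 := by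
  have := g.prop
  rwa [Matrix.det_fin_two] at this

lemma uw_sq_pos (g : SL2R) (θ : ℝ) : 0 < uFun g θ ^ 2 + wFun g θ ^ 2 := by
  rcases lt_or_eq_of_le (by positivity : (0:ℝ) ≤ uFun g θ ^ 2 + wFun g θ ^ 2) with h | h
  · exact h
  exfalso
  have hu : uFun g θ = 0 := by nlinarith [sq_nonneg (uFun g θ), sq_nonneg (wFun g θ)]
  have hw : wFun g θ = 0 := by nlinarith [sq_nonneg (uFun g θ), sq_nonneg (wFun g θ)]
  have h1 := Real.sin_sq_add_cos_sq (θ/2)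
  have hd := det_id g
  simp only [uFun, wFun] at hu hw
  have hC : Real.cos (θ/2) = 0 := by
    linear_combination (g : Matrix (Fin 2) (Fin 2) ℝ) 1 1 * hu - (g : Matrix (Fin 2) (Fin 2) ℝ) 1 0 * hw - Real.cos (θ/2) * hd
  have hS : Real.sin (θ/2) = 0 := by
    linear_combination (g : Matrix (Fin 2) (Fin 2) ℝ) 0 0 * hw - (g : Matrix (Fin 2) (Fin 2) ℝ) 0 1 * hu - Real.sin (θ/2) * hd
  rw [hC, hS] at h1; norm_num at h1

lemma sigma_pos (g : SL2R) (θ : ℝ) : 0 < sigmaK g θ := by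
  have := uw_sq_pos g θ; simp [sigmaK]; positivity

lemma uw_ne (g : SL2R) (θ : ℝ) : uFun g θ ^ 2 + wFun g θ ^ 2 ≠ 0 := (uw_sq_pos g θ).ne'

lemma cont_u (g : SL2R) : Continuous (uFun g) := by unfold uFun; fun_prop
lemma cont_w (g : SL2R) : Continuous (wFun g) := by unfold wFun; fun_prop
lemma cont_sigma (g : SL2R) : Continuous (sigmaK g) :=
  continuous_const.div (((cont_u g).pow 2).add ((cont_w g).pow 2)) (uw_ne g)

def uD (g : SL2R) (θ : ℝ) : ℝ :=
  ((g : Matrix (Fin 2) (Fin 2) ℝ) 1 0 * Real.cos (θ / 2) -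
    (g : Matrix (Fin 2) (Fin 2) ℝ) 0 0 * Real.sin (θ / 2)) / 2
def wD (g : SL2R) (θ : ℝ) : ℝ :=
  ((g : Matrix (Fin 2) (Fin 2) ℝ) 1 1 * Real.cos (θ / 2) -
    (g : Matrix (Fin 2) (Fin 2) ℝ) 0 1 * Real.sin (θ / 2)) / 2

lemma hasDerivAt_half (θ : ℝ) : HasDerivAt (fun x : ℝ => x / 2) (1/2 : ℝ) θ :=
  (hasDerivAt_id θ).div_const 2

lemma hasDerivAt_u (g : SL2R) (θ : ℝ) : HasDerivAt (uFun g) (uD g θ) θ := by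
  have hc : HasDerivAt (fun x : ℝ => Real.cos (x / 2)) (-Real.sin (θ/2) * (1/2)) θ :=
    by have := (Real.hasDerivAt_cos (θ/2)).comp θ (hasDerivAt_half θ); exact this
  have hs : HasDerivAt (fun x : ℝ => Real.sin (x / 2)) (Real.cos (θ/2) * (1/2)) θ :=
    by have := (Real.hasDerivAt_sin (θ/2)).comp θ (hasDerivAt_half θ); exact this
  have := (hc.const_mul ((g : Matrix (Fin 2) (Fin 2) ℝ) 0 0)).add
    (hs.const_mul ((g : Matrix (Fin 2) (Fin 2) ℝ) 1 0))
  refine this.congr_deriv ?_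
  unfold uD; ring

lemma hasDerivAt_w (g : SL2R) (θ : ℝ) : HasDerivAt (wFun g) (wD g θ) θ := by
  have hc : HasDerivAt (fun x : ℝ => Real.cos (x / 2)) (-Real.sin (θ/2) * (1/2)) θ :=
    by have := (Real.hasDerivAt_cos (θ/2)).comp θ (hasDerivAt_half θ); exact this
  have hs : HasDerivAt (fun x : ℝ => Real.sin (x / 2)) (Real.cos (θ/2) * (1/2)) θ :=
    by have := (Real.hasDerivAt_sin (θ/2)).comp θ (hasDerivAt_half θ); exact this
  have := (hc.const_mul ((g : Matrix (Fin 2) (Fin 2) ℝ) 0 1)).add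
    (hs.const_mul ((g : Matrix (Fin 2) (Fin 2) ℝ) 1 1))
  refine this.congr_deriv ?_
  unfold wD; ring

lemma wronskian (g : SL2R) (θ : ℝ) :
    uFun g θ * wD g θ - wFun g θ * uD g θ = 1/2 := by
  have hd := det_id g
  have h1 := Real.sin_sq_add_cos_sq (θ/2)
  unfold uFun wFun uD wD
  linear_combination ((Real.cos (θ/2))^2 + (Real.sin (θ/2))^2)/2 * hd + (1/2) * h1

lemma uFun_per (g : SL2R) (θ : ℝ) : uFun g (θ + 2*π) = -uFun g θ := by
  unfold uFun
  rw [show (θ + 2*π)/2 = θ/2 + π by ring, Real.cos_add_pi, Real.sin_add_pi]; ring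

lemma wFun_per (g : SL2R) (θ : ℝ) : wFun g (θ + 2*π) = -wFun g θ := by
  unfold wFun
  rw [show (θ + 2*π)/2 = θ/2 + π by ring, Real.cos_add_pi, Real.sin_add_pi]; ring

lemma sigma_per (g : SL2R) : Function.Periodic (sigmaK g) (2*π) := by
  intro θ; unfold sigmaK; rw [uFun_per, wFun_per]; ring_nf

lemma cos_sin_eq {x y : ℝ} (hc : Real.cos x = Real.cos y) (hs : Real.sin x = Real.sin y) :
    ∃ k : ℤ, x = y + k * (2*π) := by
  have hx : Complex.exp (x * Complex.I) = Complex.exp (y * Complex.I) := by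
    rw [Complex.exp_mul_I, Complex.exp_mul_I, ← Complex.ofReal_cos, ← Complex.ofReal_cos,
      ← Complex.ofReal_sin, ← Complex.ofReal_sin, hc, hs]
  rw [Complex.exp_eq_exp_iff_exists_int] at hx
  obtain ⟨n, hn⟩ := hx
  refine ⟨n, ?_⟩
  have h2 : (x : ℂ) * Complex.I = (↑y + (n:ℂ) * (2*π)) * Complex.I := by
    rw [hn]; push_cast; ring
  have h3 : (x : ℂ) = ↑y + (n:ℂ) * (2*π) := mul_right_cancel₀ Complex.I_ne_zero h2
  exact_mod_cast h3

lemma inv_coe (g : SL2R) : ((g⁻¹ : SL2R) : Matrix (Fin 2) (Fin 2) ℝ) =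
    !![(g : Matrix (Fin 2) (Fin 2) ℝ) 1 1, -(g : Matrix (Fin 2) (Fin 2) ℝ) 0 1;
       -(g : Matrix (Fin 2) (Fin 2) ℝ) 1 0, (g : Matrix (Fin 2) (Fin 2) ℝ) 0 0] := by
  rw [Matrix.SpecialLinearGroup.SL2_inv_expl]
  ext i j
  fin_cases i <;> fin_cases j <;> simp [Matrix.SpecialLinearGroup.coe_mk]

lemma inv00 (g : SL2R) : ((g⁻¹ : SL2R) : Matrix (Fin 2) (Fin 2) ℝ) 0 0 = (g : Matrix (Fin 2) (Fin 2) ℝ) 1 1 := by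
  rw [inv_coe]; simp
lemma inv01 (g : SL2R) : ((g⁻¹ : SL2R) : Matrix (Fin 2) (Fin 2) ℝ) 0 1 = -(g : Matrix (Fin 2) (Fin 2) ℝ) 0 1 := by
  rw [inv_coe]; simp
lemma inv10 (g : SL2R) : ((g⁻¹ : SL2R) : Matrix (Fin 2) (Fin 2) ℝ) 1 0 = -(g : Matrix (Fin 2) (Fin 2) ℝ) 1 0 := by
  rw [inv_coe]; simp
lemma inv11 (g : SL2R) : ((g⁻¹ : SL2R) : Matrix (Fin 2) (Fin 2) ℝ) 1 1 = (g : Matrix (Fin 2) (Fin 2) ℝ) 0 0 := by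
  rw [inv_coe]; simp

lemma sqrt_sigma_pos (g : SL2R) (θ : ℝ) : 0 < Real.sqrt (sigmaK g θ) :=
  Real.sqrt_pos.mpr (sigma_pos g θ)

/-- For `ψ` a branch of `g⁻¹`: `u(ψθ, g) = √σ'(θ) cos(θ/2)`. -/
lemma uFun_comp (g : SL2R) {ψ : ℝ → ℝ} (hψ : IsBranch g⁻¹ ψ) (θ : ℝ) :
    uFun g (ψ θ) = Real.sqrt (sigmaK g⁻¹ θ) * Real.cos (θ/2) := by
  have h := hψ θ
  have hd := det_id g
  unfold uFun
  rw [h.1, h.2]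
  unfold uFun wFun
  rw [inv00, inv01, inv10, inv11]
  linear_combination (Real.cos (θ/2) * Real.sqrt (sigmaK g⁻¹ θ)) * hd

lemma wFun_comp (g : SL2R) {ψ : ℝ → ℝ} (hψ : IsBranch g⁻¹ ψ) (θ : ℝ) :
    wFun g (ψ θ) = Real.sqrt (sigmaK g⁻¹ θ) * Real.sin (θ/2) := by
  have h := hψ θ
  have hd := det_id g
  unfold wFun
  rw [h.1, h.2]
  unfold uFun wFun
  rw [inv00, inv01, inv10, inv11]
  linear_combination (Real.sin (θ/2) * Real.sqrt (sigmaK g⁻¹ θ)) * hd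

lemma sigma_comp (g : SL2R) {ψ : ℝ → ℝ} (hψ : IsBranch g⁻¹ ψ) (θ : ℝ) :
    sigmaK g (ψ θ) = (sigmaK g⁻¹ θ)⁻¹ := by
  unfold sigmaK
  rw [uFun_comp g hψ, wFun_comp g hψ]
  have h1 := Real.sin_sq_add_cos_sq (θ/2)
  have h2 : Real.sqrt (sigmaK g⁻¹ θ) ^ 2 = sigmaK g⁻¹ θ :=
    Real.sq_sqrt (sigma_pos g⁻¹ θ).le
  rw [mul_pow, mul_pow, ← mul_add, h2]
  rw [show Real.cos (θ/2)^2 + Real.sin (θ/2)^2 = 1 by linarith]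
  rw [mul_one]
  norm_num [sigmaK]

/-- Composition of a branch of `g` with a branch of `g⁻¹` is `θ` mod `4π` (at the half-angle level). -/
lemma branch_comp (g : SL2R) {φ ψ : ℝ → ℝ} (hφ : IsBranch g φ) (hψ : IsBranch g⁻¹ ψ) (θ : ℝ) :
    Real.cos (φ (ψ θ) / 2) = Real.cos (θ/2) ∧ Real.sin (φ (ψ θ) / 2) = Real.sin (θ/2) := by
  have h := hφ (ψ θ)
  have hs : Real.sqrt (sigmaK g (ψ θ)) = (Real.sqrt (sigmaK g⁻¹ θ))⁻¹ := by
    rw [sigma_comp g hψ, Real.sqrt_inv]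
  have hne := (sqrt_sigma_pos g⁻¹ θ).ne'
  constructor
  · rw [h.1, uFun_comp g hψ, hs, mul_comm (Real.sqrt _) (Real.cos _), mul_assoc,
      mul_inv_cancel₀ hne, mul_one]
  · rw [h.2, wFun_comp g hψ, hs, mul_comm (Real.sqrt _) (Real.sin _), mul_assoc,
      mul_inv_cancel₀ hne, mul_one]

/-- Two branches give the same value of any `2π`-periodic function. -/
lemma branch_eq {F : ℝ → ℂ} (hF : Function.Periodic F (2*π)) {x y : ℝ}
    (hc : Real.cos (x/2) = Real.cos (y/2)) (hs : Real.sin (x/2) = Real.sin (y/2)) :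
    F x = F y := by
  obtain ⟨k, hk⟩ := cos_sin_eq hc hs
  have h := (hF.int_mul (2*k)) y
  rw [show x = y + ((2*k : ℤ) : ℝ) * (2*π) by push_cast; linarith]
  exact h

def Zc (g : SL2R) (θ : ℝ) : ℂ := (uFun g θ : ℂ) + (wFun g θ : ℂ) * Complex.I

lemma Zc_re (g : SL2R) (θ : ℝ) : (Zc g θ).re = uFun g θ := by simp [Zc]
lemma Zc_im (g : SL2R) (θ : ℝ) : (Zc g θ).im = wFun g θ := by simp [Zc]

lemma Zc_ne (g : SL2R) (θ : ℝ) : Zc g θ ≠ 0 := by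
  intro h
  have h1 : uFun g θ = 0 := by rw [← Zc_re g θ, h]; simp
  have h2 : wFun g θ = 0 := by rw [← Zc_im g θ, h]; simp
  have := uw_sq_pos g θ
  rw [h1, h2] at this; norm_num at this

def bFun (g : SL2R) (θ : ℝ) : ℝ :=
  (uFun g θ * uD g θ + wFun g θ * wD g θ) / (uFun g θ ^ 2 + wFun g θ ^ 2)

lemma cont_uD (g : SL2R) : Continuous (uD g) := by unfold uD; fun_prop
lemma cont_wD (g : SL2R) : Continuous (wD g) := by unfold wD; fun_prop

lemma cont_b (g : SL2R) : Continuous (bFun g) :=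
  (((cont_u g).mul (cont_uD g)).add ((cont_w g).mul (cont_wD g))).div
    (((cont_u g).pow 2).add ((cont_w g).pow 2)) (uw_ne g)

def BFun (g : SL2R) (θ : ℝ) : ℝ := ∫ s in (0:ℝ)..θ, bFun g s
def AFun (g : SL2R) (θ : ℝ) : ℝ := ∫ s in (0:ℝ)..θ, sigmaK g s
def Phi (g : SL2R) (θ : ℝ) : ℝ := 2 * Complex.arg (Zc g 0) + AFun g θ

lemma hasDerivAt_B (g : SL2R) (θ : ℝ) : HasDerivAt (BFun g) (bFun g θ) θ :=
  ((cont_b g).integral_hasStrictDerivAt 0 θ).hasDerivAt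

lemma hasDerivAt_A (g : SL2R) (θ : ℝ) : HasDerivAt (AFun g) (sigmaK g θ) θ :=
  ((cont_sigma g).integral_hasStrictDerivAt 0 θ).hasDerivAt

lemma hasDerivAt_Phi (g : SL2R) (θ : ℝ) : HasDerivAt (Phi g) (sigmaK g θ) θ :=
  (hasDerivAt_A g θ).const_add _

lemma cont_Phi (g : SL2R) : Continuous (Phi g) :=
  continuous_iff_continuousAt.mpr fun θ => (hasDerivAt_Phi g θ).continuousAt

lemma hasDerivAt_Z (g : SL2R) (θ : ℝ) :
    HasDerivAt (Zc g) ((uD g θ : ℂ) + (wD g θ : ℂ) * Complex.I) θ :=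
  (hasDerivAt_u g θ).ofReal_comp.add ((hasDerivAt_w g θ).ofReal_comp.mul_const _)

lemma alg_id (g : SL2R) (θ : ℝ) :
    (uD g θ : ℂ) + (wD g θ : ℂ) * Complex.I =
      Zc g θ * ((bFun g θ : ℂ) + ((sigmaK g θ / 2 : ℝ) : ℂ) * Complex.I) := by
  have hwC : (uFun g θ : ℂ) * wD g θ - wFun g θ * uD g θ = 1/2 := by
    have := congrArg (fun x : ℝ => (x : ℂ)) (wronskian g θ)
    push_cast at this; exact this
  have hrC : ((uFun g θ : ℂ)^2 + (wFun g θ : ℂ)^2) ≠ 0 := by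
    intro h; apply uw_ne g θ; exact_mod_cast h
  unfold Zc bFun sigmaK
  have hD : ((uFun g θ : ℂ)^2 + (wFun g θ : ℂ)^2) * ((uFun g θ:ℂ)^2 + (wFun g θ:ℂ)^2)⁻¹ = 1 :=
    mul_inv_cancel₀ hrC
  push_cast
  linear_combination (-((uD g θ:ℂ) + (wD g θ:ℂ) * Complex.I)) * hD
    + (((uFun g θ:ℂ)^2 + (wFun g θ:ℂ)^2)⁻¹ * ((uD g θ:ℂ) + (wD g θ:ℂ) * Complex.I) * (wFun g θ:ℂ)^2
      - ((uFun g θ:ℂ) + (wFun g θ:ℂ) * Complex.I) * ((uFun g θ:ℂ)^2 + (wFun g θ:ℂ)^2)⁻¹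
        * (wFun g θ:ℂ) * (wD g θ:ℂ)) * Complex.I_sq
    + (((uFun g θ:ℂ) + (wFun g θ:ℂ) * Complex.I) * ((uFun g θ:ℂ)^2 + (wFun g θ:ℂ)^2)⁻¹
        * Complex.I) * hwC

def Kc (g : SL2R) (t : ℝ) : ℂ :=
  Zc g t * Complex.exp (-(((BFun g t : ℝ) : ℂ) +
    ((Complex.arg (Zc g 0) + AFun g t / 2 : ℝ) : ℂ) * Complex.I))

lemma hasDerivAt_K (g : SL2R) (t : ℝ) : HasDerivAt (Kc g) 0 t := by
  have hB' : HasDerivAt (fun s => ((BFun g s : ℝ) : ℂ)) ((bFun g t : ℝ) : ℂ) t :=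
    (hasDerivAt_B g t).ofReal_comp
  have hA' : HasDerivAt (fun s => ((Complex.arg (Zc g 0) + AFun g s / 2 : ℝ) : ℂ))
      ((sigmaK g t / 2 : ℝ) : ℂ) t :=
    (((hasDerivAt_A g t).div_const 2).const_add _).ofReal_comp
  have hE : HasDerivAt (fun s => -(((BFun g s : ℝ) : ℂ) +
      ((Complex.arg (Zc g 0) + AFun g s / 2 : ℝ) : ℂ) * Complex.I))
      (-((bFun g t : ℂ) + ((sigmaK g t / 2 : ℝ) : ℂ) * Complex.I)) t :=
    (hB'.add (hA'.mul_const _)).neg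
  have hexp := hE.cexp
  have hK := (hasDerivAt_Z g t).mul hexp
  refine hK.congr_deriv ?_
  rw [alg_id g t]
  ring

lemma Zc_eq (g : SL2R) (θ : ℝ) :
    Zc g θ = ((‖Zc g 0‖ : ℝ) : ℂ) * Complex.exp ((BFun g θ : ℝ) : ℂ) *
      Complex.exp (((Complex.arg (Zc g 0) + AFun g θ / 2 : ℝ) : ℂ) * Complex.I) := by
  have hconst : Kc g θ = Kc g 0 :=
    is_const_of_deriv_eq_zero (fun t => (hasDerivAt_K g t).differentiableAt)
      (fun t => (hasDerivAt_K g t).deriv) θ 0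
  have hB0 : BFun g 0 = 0 := intervalIntegral.integral_same
  have hA0 : AFun g 0 = 0 := intervalIntegral.integral_same
  have hK0 : Kc g 0 = ((‖Zc g 0‖ : ℝ) : ℂ) := by
    unfold Kc
    rw [hB0, hA0]
    rw [show (-(((0:ℝ):ℂ) + (((Zc g 0).arg + 0/2 : ℝ):ℂ) * Complex.I))
        = -(((Zc g 0).arg : ℂ) * Complex.I) by push_cast; ring]
    nth_rewrite 1 [← Complex.norm_mul_exp_arg_mul_I (Zc g 0)]
    rw [mul_assoc, ← Complex.exp_add, add_neg_cancel, Complex.exp_zero, mul_one]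
  have h3 := hconst.trans hK0
  unfold Kc at h3
  have h4 := congrArg (· * Complex.exp (((BFun g θ : ℝ) : ℂ) +
      ((Complex.arg (Zc g 0) + AFun g θ / 2 : ℝ) : ℂ) * Complex.I)) h3
  simp only [mul_assoc, ← Complex.exp_add, neg_add_cancel, Complex.exp_zero, mul_one] at h4
  rw [h4, mul_assoc, ← Complex.exp_add]

lemma isBranch_Phi (g : SL2R) : IsBranch g (Phi g) := by
  intro θ
  set ρ : ℝ := ‖Zc g 0‖ * Real.exp (BFun g θ) with hρ
  have hρpos : 0 < ρ := by
    apply mul_pos _ (Real.exp_pos _)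
    exact norm_pos_iff.mpr (Zc_ne g 0)
  have hhalf : Complex.arg (Zc g 0) + AFun g θ / 2 = Phi g θ / 2 := by
    unfold Phi; ring
  have hZ := Zc_eq g θ
  rw [hhalf] at hZ
  have hu : uFun g θ = ρ * Real.cos (Phi g θ / 2) := by
    have := congrArg Complex.re hZ
    rw [Zc_re] at this
    rw [this, ← Complex.ofReal_exp, ← Complex.ofReal_mul, ← hρ, Complex.re_ofReal_mul,
      Complex.exp_ofReal_mul_I_re]
  have hw : wFun g θ = ρ * Real.sin (Phi g θ / 2) := by
    have := congrArg Complex.im hZ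
    rw [Zc_im] at this
    rw [this, ← Complex.ofReal_exp, ← Complex.ofReal_mul, ← hρ, Complex.im_ofReal_mul,
      Complex.exp_ofReal_mul_I_im]
  have hsig : sigmaK g θ = (ρ⁻¹)^2 := by
    unfold sigmaK
    rw [hu, hw]
    have h1 := Real.sin_sq_add_cos_sq (Phi g θ / 2)
    rw [show (ρ * Real.cos (Phi g θ / 2))^2 + (ρ * Real.sin (Phi g θ / 2))^2 = ρ^2 from by
      linear_combination ρ^2 * h1]
    rw [one_div, ← inv_pow]
  have hsqrt : Real.sqrt (sigmaK g θ) = ρ⁻¹ := by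
    rw [hsig, Real.sqrt_sq (inv_nonneg.mpr hρpos.le)]
  constructor
  · rw [hu, hsqrt]; field_simp
  · rw [hw, hsqrt]; field_simp

def cg (g : SL2R) : ℝ := ∫ s in (0:ℝ)..(2*π), sigmaK g s

lemma Phi_add (g : SL2R) (θ : ℝ) : Phi g (θ + 2*π) = Phi g θ + cg g := by
  unfold Phi AFun cg
  have h1 : (∫ s in (0:ℝ)..θ, sigmaK g s) + (∫ s in θ..(θ + 2*π), sigmaK g s)
      = ∫ s in (0:ℝ)..(θ + 2*π), sigmaK g s :=
    intervalIntegral.integral_add_adjacent_intervals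
      ((cont_sigma g).intervalIntegrable _ _) ((cont_sigma g).intervalIntegrable _ _)
  have h2 : (∫ s in θ..(θ + 2*π), sigmaK g s) = ∫ s in (0:ℝ)..(0 + 2*π), sigmaK g s :=
    (sigma_per g).intervalIntegral_add_eq θ 0
  rw [← h1, h2]
  norm_num
  ring

lemma cg_pos (g : SL2R) : 0 < cg g :=
  intervalIntegral.intervalIntegral_pos_of_pos ((cont_sigma g).intervalIntegrable _ _)
    (sigma_pos g) (by positivity)

lemma cg_eq (g : SL2R) : ∃ k : ℤ, cg g = 2*π + k * (4*π) := by
  have hb0 := isBranch_Phi g 0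
  have hb2 := isBranch_Phi g (2*π)
  have hu2 : uFun g (2*π) = -uFun g 0 := by
    have := uFun_per g 0; rwa [zero_add] at this
  have hw2 : wFun g (2*π) = -wFun g 0 := by
    have := wFun_per g 0; rwa [zero_add] at this
  have hs2 : sigmaK g (2*π) = sigmaK g 0 := by
    have := sigma_per g 0; rwa [zero_add] at this
  have hc : Real.cos (Phi g (2*π) / 2) = Real.cos (Phi g 0 / 2 + π) := by
    rw [hb2.1, hu2, hs2, Real.cos_add_pi, hb0.1]; ring
  have hs : Real.sin (Phi g (2*π) / 2) = Real.sin (Phi g 0 / 2 + π) := by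
    rw [hb2.2, hw2, hs2, Real.sin_add_pi, hb0.2]; ring
  obtain ⟨k, hk⟩ := cos_sin_eq hc hs
  have hP : Phi g (2*π) = Phi g 0 + cg g := by
    have := Phi_add g 0; rwa [zero_add] at this
  exact ⟨k, by rw [hP] at hk; push_cast at hk ⊢; linarith⟩

lemma comp_const (g : SL2R) (θ : ℝ) :
    Phi g (Phi g⁻¹ θ) - θ = Phi g (Phi g⁻¹ 0) - 0 := by
  have hD : ∀ t : ℝ, HasDerivAt (fun s => Phi g (Phi g⁻¹ s) - s) 0 t := by
    intro t
    have h1 : HasDerivAt (fun s => Phi g (Phi g⁻¹ s))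
        (sigmaK g (Phi g⁻¹ t) * sigmaK g⁻¹ t) t :=
      (hasDerivAt_Phi g (Phi g⁻¹ t)).comp t (hasDerivAt_Phi g⁻¹ t)
    have h2 : sigmaK g (Phi g⁻¹ t) * sigmaK g⁻¹ t = 1 := by
      rw [sigma_comp g (isBranch_Phi g⁻¹) t]
      exact inv_mul_cancel₀ (sigma_pos g⁻¹ t).ne'
    have := h1.sub (hasDerivAt_id t)
    rw [h2] at this
    simp only [sub_self] at this
    exact this
  exact is_const_of_deriv_eq_zero (fun t => (hD t).differentiableAt)
    (fun t => (hD t).deriv) θ 0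

lemma Phi_add_nat (g : SL2R) (x : ℝ) : ∀ n : ℕ, Phi g (x + n*(2*π)) = Phi g x + n * cg g := by
  intro n
  induction n with
  | zero => simp
  | succ m ih =>
    have : x + (m+1 : ℕ)*(2*π) = (x + m*(2*π)) + 2*π := by push_cast; ring
    rw [this, Phi_add, ih]
    push_cast; ring

lemma winding (g : SL2R) : cg g = 2*π := by
  obtain ⟨k, hk⟩ := cg_eq g
  obtain ⟨k', hk'⟩ := cg_eq g⁻¹
  have hπ := Real.pi_pos
  have hk0 : 0 ≤ k := by
    by_contra h
    push_neg at h
    have : (k:ℝ) ≤ -1 := by exact_mod_cast (show k ≤ -1 by omega)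
    nlinarith [cg_pos g]
  have hk'0 : 0 ≤ k' := by
    by_contra h
    push_neg at h
    have : (k':ℝ) ≤ -1 := by exact_mod_cast (show k' ≤ -1 by omega)
    nlinarith [cg_pos g⁻¹]
  -- main identity
  have h4 := comp_const g (2*π)
  -- Phi g⁻¹ (2π) = Phi g⁻¹ 0 + cg g⁻¹
  have hP : Phi g⁻¹ (2*π) = Phi g⁻¹ 0 + cg g⁻¹ := by
    have := Phi_add g⁻¹ 0; rwa [zero_add] at this
  set n : ℕ := (2*k'+1).toNat with hn
  have hnn : ((n:ℤ):ℝ) = 2*(k':ℝ)+1 := by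
    rw [hn, Int.toNat_of_nonneg (by omega)]; push_cast; ring
  have hcg' : cg g⁻¹ = (n:ℝ) * (2*π) := by
    rw [hk']
    rw [show ((n:ℝ)) = ((n:ℤ):ℝ) by push_cast; ring, hnn]
    ring
  have h5 : Phi g (Phi g⁻¹ 0 + (n:ℝ)*(2*π)) = Phi g (Phi g⁻¹ 0) + 2*π := by
    rw [← hcg', ← hP]
    linarith [h4]
  rw [Phi_add_nat g (Phi g⁻¹ 0) n] at h5
  have hmain : (2*(k':ℝ)+1) * (2*π + (k:ℝ)*(4*π)) = 2*π := by
    rw [← hk]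
    rw [show (2*(k':ℝ)+1) = ((n:ℤ):ℝ) from hnn.symm]
    push_cast
    linarith [h5]
  have hZ : (2*k'+1)*(1+2*k) = (1:ℤ) := by
    have h2 : ((2*k'+1)*(1+2*k) : ℝ) = 1 := by
      apply mul_left_cancel₀ (show (2*π:ℝ) ≠ 0 by positivity)
      push_cast
      linear_combination hmain
    exact_mod_cast h2
  have hk_eq : k = 0 := by nlinarith [hZ, hk0, hk'0]
  rw [hk, hk_eq]
  norm_num

lemma Phi_per (g : SL2R) (θ : ℝ) : Phi g (θ + 2*π) = Phi g θ + 2*π := by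
  rw [Phi_add, winding]

lemma cont_sigmaKpow (g : SL2R) (ℓ : ℂ) : Continuous (fun θ => sigmaKpow g θ ℓ) := by
  unfold sigmaKpow
  exact Complex.continuous_exp.comp (continuous_const.mul
    (Complex.continuous_ofReal.comp ((cont_sigma g).log (fun θ => (sigma_pos g θ).ne'))))

lemma sigmaKpow_per (g : SL2R) (ℓ : ℂ) (θ : ℝ) : sigmaKpow g (θ + 2*π) ℓ = sigmaKpow g θ ℓ := by
  unfold sigmaKpow
  rw [sigma_per g θ]

/-- with respect to `⟨f|v⟩ = (1/2π)∫₀^{2π} conj(f)·v dθ`, the adjoint of the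
circle realisation `T_ℓ(g)` is `T_{ℓ*}(g⁻¹)`, where `ℓ* = -conj(ℓ) - 1`. -/
theorem stmt4 (ℓ : ℂ) (lstar : ℂ) (hlstar : lstar = -(starRingEnd ℂ) ℓ - 1)
    (g : SL2R) (φ ψ : ℝ → ℝ) (hφ : IsBranch g φ) (hψ : IsBranch g⁻¹ ψ)
    (f v : ℝ → ℂ) (hf : Continuous f) (hfper : Function.Periodic f (2 * π))
    (hv : Continuous v) (hvper : Function.Periodic v (2 * π)) :
    (1 / (2 * π) : ℂ) *
        ∫ θ in (0 : ℝ)..(2 * π), (starRingEnd ℂ) (f θ) * (sigmaKpow g θ ℓ * v (φ θ)) =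
      (1 / (2 * π) : ℂ) *
        ∫ θ in (0 : ℝ)..(2 * π),
          (starRingEnd ℂ) (sigmaKpow g⁻¹ θ lstar * f (ψ θ)) * v θ := by
  congr 1
  set F : ℝ → ℂ := fun θ => (starRingEnd ℂ) (f θ) * (sigmaKpow g θ ℓ * v (Phi g θ)) with hF
  -- Step A : replace the branch φ by the canonical branch
  have hA : ∀ θ, (starRingEnd ℂ) (f θ) * (sigmaKpow g θ ℓ * v (φ θ)) = F θ := by
    intro θ
    have h1 := hφ θ
    have h2 := isBranch_Phi g θ
    have hveq : v (φ θ) = v (Phi g θ) :=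
      branch_eq hvper (by rw [h1.1, h2.1]) (by rw [h1.2, h2.2])
    rw [hF, hveq]
  have hFcont : Continuous F := by
    apply ((Complex.continuous_conj.comp hf).mul _)
    exact (cont_sigmaKpow g ℓ).mul (hv.comp (cont_Phi g))
  have hFper : Function.Periodic F (2*π) := by
    intro θ
    rw [hF]
    simp only
    rw [hfper θ, sigmaKpow_per, Phi_per, hvper]
  -- Step B : shift the integration interval
  have hB : (∫ θ in (0:ℝ)..(2*π), F θ) =
      ∫ θ in (Phi g⁻¹ 0)..(Phi g⁻¹ 0 + 2*π), F θ := by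
    have := hFper.intervalIntegral_add_eq 0 (Phi g⁻¹ 0)
    rw [zero_add] at this
    exact this
  have hΨ2 : Phi g⁻¹ (2*π) = Phi g⁻¹ 0 + 2*π := by
    have := Phi_per g⁻¹ 0; rwa [zero_add] at this
  -- Step C : change of variables θ = Phi g⁻¹ t
  have hC : (∫ t in (0:ℝ)..(2*π), sigmaK g⁻¹ t • F (Phi g⁻¹ t)) =
      ∫ θ in (Phi g⁻¹ 0)..(Phi g⁻¹ (2*π)), F θ := by
    exact intervalIntegral.integral_comp_smul_deriv
      (fun x _ => hasDerivAt_Phi g⁻¹ x) (cont_sigma g⁻¹).continuousOn hFcont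
  -- Step D : pointwise identification with the adjoint integrand
  have hD : ∀ t, sigmaK g⁻¹ t • F (Phi g⁻¹ t) =
      (starRingEnd ℂ) (sigmaKpow g⁻¹ t lstar * f (ψ t)) * v t := by
    intro t
    have hfeq : f (Phi g⁻¹ t) = f (ψ t) := by
      have h1 := (isBranch_Phi g⁻¹) t
      have h2 := hψ t
      exact branch_eq hfper (by rw [h1.1, h2.1]) (by rw [h1.2, h2.2])
    have hveq : v (Phi g (Phi g⁻¹ t)) = v t := by
      obtain ⟨hc, hs⟩ := branch_comp g (isBranch_Phi g) (isBranch_Phi g⁻¹) t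
      exact branch_eq hvper hc hs
    have hpow1 : sigmaKpow g (Phi g⁻¹ t) ℓ =
        Complex.exp (ℓ * Real.log (sigmaK g⁻¹ t)) := by
      unfold sigmaKpow
      rw [sigma_comp g (isBranch_Phi g⁻¹) t, Real.log_inv]
      push_cast
      ring_nf
    have hpow2 : (starRingEnd ℂ) (sigmaKpow g⁻¹ t lstar) =
        (sigmaK g⁻¹ t : ℂ) * Complex.exp (ℓ * Real.log (sigmaK g⁻¹ t)) := by
      unfold sigmaKpow
      rw [← Complex.exp_conj]
      rw [map_mul, map_neg, hlstar, Complex.conj_ofReal]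
      rw [map_sub, map_neg, Complex.conj_conj, map_one]
      rw [show (-(-ℓ - 1) : ℂ) = ℓ + 1 by ring]
      rw [add_mul, one_mul, Complex.exp_add]
      rw [show Complex.exp ((Real.log (sigmaK g⁻¹ t) : ℝ) : ℂ)
          = ((sigmaK g⁻¹ t : ℝ) : ℂ) from by
        rw [← Complex.ofReal_exp, Real.exp_log (sigma_pos g⁻¹ t)]]
      ring
    rw [hF]
    simp only
    rw [hfeq, hveq, hpow1, map_mul, hpow2]
    rw [Complex.real_smul]
    ring
  calc (∫ θ in (0:ℝ)..(2*π), (starRingEnd ℂ) (f θ) * (sigmaKpow g θ ℓ * v (φ θ)))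
      = ∫ θ in (0:ℝ)..(2*π), F θ := by
        exact intervalIntegral.integral_congr (fun x _ => hA x)
    _ = ∫ θ in (Phi g⁻¹ 0)..(Phi g⁻¹ (2*π)), F θ := by rw [hB, hΨ2]
    _ = ∫ t in (0:ℝ)..(2*π), sigmaK g⁻¹ t • F (Phi g⁻¹ t) := hC.symm
    _ = ∫ θ in (0:ℝ)..(2*π), (starRingEnd ℂ) (sigmaKpow g⁻¹ θ lstar * f (ψ θ)) * v θ :=
        intervalIntegral.integral_congr (fun x _ => hD x)

end
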